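/- arXiv:2602.18134 — 4 statements merged into one kernel-verified Lean document; each statement's English description precedes it below -/
import Mathlib

section
/- Let A ∈ ℝ^{m×n}, let u, γ_h, p₁ be positive reals with 0 < γ_h < u, let Ṽ ∈ ℝ^{n×n} satisfy ‖ṼᵀṼ − I‖₂ ≤ p₁u < 1, set Ã = AṼ, and let ΔÃ ∈ ℝ^{m×n} satisfy |ΔÃ_{ij}| ≤ u|Ã_{ij}| + 2γ_h(|A||Ṽ|)_{ij} for all i, j. Then ‖ΔÃ‖_F ≤ 6nu‖A‖₂. -/
open scoped BigOperators
open Matrix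

/-- Euclidean norm of a vector in `ℝ^m`. -/
noncomputable def vecNorm {m : ℕ} (v : Fin m → ℝ) : ℝ :=
  Real.sqrt (∑ i, v i ^ 2)

/-- The `k`-th largest singular value of a real `m × n` matrix
(`k = 0` gives the largest). -/
noncomputable def sval {m n : ℕ} (A : Matrix (Fin m) (Fin n) ℝ) (k : Fin n) : ℝ :=
  Real.sqrt
    (((Matrix.isHermitian_conjTranspose_mul_self A).eigenvalues ∘
      Tuple.sort (Matrix.isHermitian_conjTranspose_mul_self A).eigenvalues) k.rev)

/-- Spectral norm: the largest singular value. -/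
noncomputable def specNorm {m n : ℕ} (A : Matrix (Fin m) (Fin n) ℝ) : ℝ :=
  ⨆ k, sval A k

/-- Smallest singular value. -/
noncomputable def sMin {m n : ℕ} (A : Matrix (Fin m) (Fin n) ℝ) : ℝ :=
  ⨅ k, sval A k

/-- Frobenius norm. -/
noncomputable def frobNorm {m n : ℕ} (A : Matrix (Fin m) (Fin n) ℝ) : ℝ :=
  Real.sqrt (∑ i, ∑ j, (A i j) ^ 2)

/-- Frobenius norm of the off-diagonal part of a square matrix. -/
noncomputable def offF {n : ℕ} (M : Matrix (Fin n) (Fin n) ℝ) : ℝ :=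
  frobNorm (M - Matrix.diagonal (fun i => M i i))

/-- Diagonal matrix of inverse column norms `D(A)`. -/
noncomputable def colScale {m n : ℕ} (A : Matrix (Fin m) (Fin n) ℝ) :
    Matrix (Fin n) (Fin n) ℝ :=
  Matrix.diagonal (fun j => (vecNorm (fun i => A i j))⁻¹)

/-- Condition number `κ₂(A) = σ_max(A) / σ_min(A)`. -/
noncomputable def kappa2 {m n : ℕ} (A : Matrix (Fin m) (Fin n) ℝ) : ℝ :=
  specNorm A / sMin A

/-- One-sided scaled condition number `κ₂ᴰ(A) = κ₂(A · D(A))`. -/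
noncomputable def scaledCond {m n : ℕ} (A : Matrix (Fin m) (Fin n) ℝ) : ℝ :=
  kappa2 (A * colScale A)

/-- Entrywise absolute value of a matrix. -/
def matAbs {m n : ℕ} (A : Matrix (Fin m) (Fin n) ℝ) : Matrix (Fin m) (Fin n) ℝ :=
  fun i j => |A i j|

/-!
Entrywise, `|ΔÃ| ≤ u |A Ṽ| + 2γ_h |A| |Ṽ| ≤ 3u |A| |Ṽ|`, and by Cauchy–Schwarz
`‖ |A| |Ṽ| ‖_F ≤ ‖A‖_F ‖Ṽ‖_F`. Both Frobenius norms are controlled by the spectral data: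
`‖A‖_F² = tr(AᵀA) ≤ n ‖A‖₂²`, and `‖Ṽ‖_F² = n + tr(ṼᵀṼ - I) ≤ n (1 + ‖ṼᵀṼ - I‖₂) ≤ 2n`.
Hence `‖ΔÃ‖_F ≤ 3u · √n ‖A‖₂ · √(2n) ≤ 6nu ‖A‖₂`.
-/

section FrobeniusNorm

variable {m n p : ℕ}

lemma frobNorm_nonneg (A : Matrix (Fin m) (Fin n) ℝ) : 0 ≤ frobNorm A :=
  Real.sqrt_nonneg _

lemma frobNorm_sq (A : Matrix (Fin m) (Fin n) ℝ) : frobNorm A ^ 2 = ∑ i, ∑ j, A i j ^ 2 :=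
  Real.sq_sqrt (by positivity)

lemma frobNorm_sq_eq_trace (A : Matrix (Fin m) (Fin n) ℝ) : frobNorm A ^ 2 = (Aᵀ * A).trace := by
  rw [frobNorm_sq]
  simp only [trace, diag, mul_apply, transpose_apply, sq]
  exact Finset.sum_comm

lemma frobNorm_smul (c : ℝ) (A : Matrix (Fin m) (Fin n) ℝ) :
    frobNorm (c • A) = |c| * frobNorm A := by
  have sum_sq_smul : ∑ i, ∑ j, (c • A) i j ^ 2 = c ^ 2 * ∑ i, ∑ j, A i j ^ 2 := by
    simp only [Matrix.smul_apply, smul_eq_mul, mul_pow, Finset.mul_sum]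
  rw [frobNorm, frobNorm, sum_sq_smul, Real.sqrt_mul (sq_nonneg c), Real.sqrt_sq_eq_abs]

lemma frobNorm_le_of_abs_le {A B : Matrix (Fin m) (Fin n) ℝ} (h : ∀ i j, |A i j| ≤ |B i j|) :
    frobNorm A ≤ frobNorm B :=
  Real.sqrt_le_sqrt <| Finset.sum_le_sum fun i _ =>
    Finset.sum_le_sum fun j _ => sq_le_sq.2 (h i j)

lemma matAbs_mul_matAbs_nonneg (A : Matrix (Fin m) (Fin n) ℝ) (B : Matrix (Fin n) (Fin p) ℝ)
    (i : Fin m) (j : Fin p) : 0 ≤ (matAbs A * matAbs B) i j := by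
  rw [mul_apply]
  exact Finset.sum_nonneg fun _ _ => mul_nonneg (abs_nonneg _) (abs_nonneg _)

lemma abs_mul_apply_le_matAbs_mul (A : Matrix (Fin m) (Fin n) ℝ) (B : Matrix (Fin n) (Fin p) ℝ)
    (i : Fin m) (j : Fin p) : |(A * B) i j| ≤ (matAbs A * matAbs B) i j := by
  simpa only [mul_apply, matAbs, abs_mul] using
    Finset.abs_sum_le_sum_abs (fun k => A i k * B k j) Finset.univ

lemma frobNorm_matAbs_mul_le (A : Matrix (Fin m) (Fin n) ℝ) (B : Matrix (Fin n) (Fin p) ℝ) :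
    frobNorm (matAbs A * matAbs B) ≤ frobNorm A * frobNorm B := by
  refine le_of_pow_le_pow_left₀ two_ne_zero
    (mul_nonneg (frobNorm_nonneg A) (frobNorm_nonneg B)) ?_
  have cauchy_schwarz : ∀ i j, (matAbs A * matAbs B) i j ^ 2 ≤
      (∑ k, A i k ^ 2) * ∑ k, B k j ^ 2 := fun i j => by
    simpa only [mul_apply, matAbs, sq_abs] using
      Finset.sum_mul_sq_le_sq_mul_sq Finset.univ (fun k => |A i k|) (fun k => |B k j|)
  calc frobNorm (matAbs A * matAbs B) ^ 2
      ≤ ∑ i, ∑ j, (∑ k, A i k ^ 2) * ∑ k, B k j ^ 2 := by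
        rw [frobNorm_sq]
        exact Finset.sum_le_sum fun i _ => Finset.sum_le_sum fun j _ => cauchy_schwarz i j
    _ = (frobNorm A * frobNorm B) ^ 2 := by
        rw [mul_pow, frobNorm_sq, frobNorm_sq, Finset.sum_comm (f := fun k j => B k j ^ 2)]
        simp only [← Finset.mul_sum, ← Finset.sum_mul]

end FrobeniusNorm

section SpectralNorm

variable {m n : ℕ}

lemma specNorm_nonneg (A : Matrix (Fin m) (Fin n) ℝ) : 0 ≤ specNorm A :=
  Real.iSup_nonneg fun _ => Real.sqrt_nonneg _

lemma eigenvalues_conjTranspose_mul_self_le_specNorm_sq (A : Matrix (Fin m) (Fin n) ℝ)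
    (j : Fin n) : (isHermitian_conjTranspose_mul_self A).eigenvalues j ≤ specNorm A ^ 2 := by
  set hA := isHermitian_conjTranspose_mul_self A
  have eigenvalue_nonneg : 0 ≤ hA.eigenvalues j := by
    have := posSemidef_conjTranspose_mul_self A
    exact this.eigenvalues_nonneg j
  -- `sval` lists the eigenvalues in decreasing order; `k` is the position of the `j`-th one
  set k := (Tuple.sort hA.eigenvalues).symm j |>.rev
  have sval_eq : sval A k = √(hA.eigenvalues j) := by
    simp only [sval, k, Fin.rev_rev, Function.comp_apply, Equiv.apply_symm_apply]
  calc hA.eigenvalues j = sval A k ^ 2 := by rw [sval_eq, Real.sq_sqrt eigenvalue_nonneg]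
    _ ≤ specNorm A ^ 2 := pow_le_pow_left₀ (Real.sqrt_nonneg _)
        (le_ciSup (f := sval A) (Set.finite_range _).bddAbove k) 2

lemma frobNorm_sq_le_card_mul_specNorm_sq (A : Matrix (Fin m) (Fin n) ℝ) :
    frobNorm A ^ 2 ≤ n * specNorm A ^ 2 := by
  calc frobNorm A ^ 2 = (Aᴴ * A).trace := frobNorm_sq_eq_trace A
    _ = ∑ k, (isHermitian_conjTranspose_mul_self A).eigenvalues k := by
        simpa using (isHermitian_conjTranspose_mul_self A).trace_eq_sum_eigenvalues
    _ ≤ ∑ _k : Fin n, specNorm A ^ 2 :=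
        Finset.sum_le_sum fun k _ => eigenvalues_conjTranspose_mul_self_le_specNorm_sq A k
    _ = n * specNorm A ^ 2 := by simp

lemma frobNorm_le_sqrt_card_mul_specNorm (A : Matrix (Fin m) (Fin n) ℝ) :
    frobNorm A ≤ √n * specNorm A := by
  refine le_of_pow_le_pow_left₀ two_ne_zero (by positivity [specNorm_nonneg A]) ?_
  rw [mul_pow, Real.sq_sqrt n.cast_nonneg]
  exact frobNorm_sq_le_card_mul_specNorm_sq A

lemma trace_le_card_mul_specNorm (E : Matrix (Fin n) (Fin n) ℝ) : E.trace ≤ n * specNorm E := by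
  have diag_le_frobNorm : √(∑ j, E j j ^ 2) ≤ frobNorm E :=
    Real.sqrt_le_sqrt <| Finset.sum_le_sum fun i _ =>
      Finset.single_le_sum (f := fun j => E i j ^ 2) (fun _ _ => sq_nonneg _) (Finset.mem_univ i)
  calc E.trace = ∑ j, E j j * 1 := by simp [trace]
    _ ≤ √(∑ j, E j j ^ 2) * √(∑ _j : Fin n, (1 : ℝ) ^ 2) := Real.sum_mul_le_sqrt_mul_sqrt _ _ _
    _ ≤ frobNorm E * √n := by
        simp only [one_pow, Finset.sum_const, Finset.card_univ, Fintype.card_fin, nsmul_eq_mul,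
          mul_one]
        gcongr
    _ ≤ √n * specNorm E * √n := by gcongr; exact frobNorm_le_sqrt_card_mul_specNorm E
    _ = n * specNorm E := by
        rw [mul_comm, ← mul_assoc, Real.mul_self_sqrt n.cast_nonneg]

lemma frobNorm_sq_le_card_mul_one_add_specNorm (V : Matrix (Fin m) (Fin n) ℝ) :
    frobNorm V ^ 2 ≤ n * (1 + specNorm (Vᵀ * V - 1)) := by
  have := trace_le_card_mul_specNorm (Vᵀ * V - 1)
  rw [trace_sub, trace_one, Fintype.card_fin] at this
  rw [frobNorm_sq_eq_trace]
  linarith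

end SpectralNorm

theorem perturbation_frobenius_bound_general
    {m n : ℕ} (A : Matrix (Fin m) (Fin n) ℝ)
    (u γh p₁ : ℝ) (hu : 0 < u) (hγhu : γh < u)
    (V : Matrix (Fin n) (Fin n) ℝ)
    (hV : specNorm (Vᵀ * V - 1) ≤ p₁ * u) (hp₁u : p₁ * u < 1)
    (ΔA : Matrix (Fin m) (Fin n) ℝ)
    (hΔ : ∀ i j, |ΔA i j| ≤ u * |(A * V) i j| + 2 * γh * ((matAbs A * matAbs V) i j)) :
    frobNorm ΔA ≤ 6 * n * u * specNorm A := by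
  set C := matAbs A * matAbs V
  have entrywise : ∀ i j, |ΔA i j| ≤ |((3 * u) • C) i j| := fun i j => by
    have hC : 0 ≤ C i j := matAbs_mul_matAbs_nonneg A V i j
    have hAV : u * |(A * V) i j| ≤ u * C i j :=
      mul_le_mul_of_nonneg_left (abs_mul_apply_le_matAbs_mul A V i j) hu.le
    have hγC : γh * C i j ≤ u * C i j := mul_le_mul_of_nonneg_right hγhu.le hC
    rw [Matrix.smul_apply, smul_eq_mul, abs_of_nonneg (mul_nonneg (by positivity) hC)]
    linarith [hΔ i j]
  have frobNorm_V : frobNorm V ≤ 2 * √n := by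
    refine le_of_pow_le_pow_left₀ two_ne_zero (by positivity) ?_
    have hE : specNorm (Vᵀ * V - 1) ≤ 1 := hV.trans hp₁u.le
    rw [mul_pow, Real.sq_sqrt n.cast_nonneg]
    nlinarith [frobNorm_sq_le_card_mul_one_add_specNorm V, n.cast_nonneg (α := ℝ)]
  calc frobNorm ΔA ≤ 3 * u * frobNorm C := by
        simpa [frobNorm_smul, abs_of_pos hu] using frobNorm_le_of_abs_le entrywise
    _ ≤ 3 * u * (√n * specNorm A * (2 * √n)) := by
        gcongr
        exact (frobNorm_matAbs_mul_le A V).trans <| mul_le_mul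
          (frobNorm_le_sqrt_card_mul_specNorm A) frobNorm_V (frobNorm_nonneg V)
          (by positivity [specNorm_nonneg A])
    _ = 6 * n * u * specNorm A := by
        rw [show √n * specNorm A * (2 * √n) = 2 * (√n * √n) * specNorm A by ring,
          Real.mul_self_sqrt n.cast_nonneg]
        ring

/-- Normwise bound on the perturbation of the preconditioned matrix:
`‖ΔÃ‖_F ≤ 6nu‖A‖₂`. -/
theorem perturbation_frobenius_bound
    {m n : ℕ} (A : Matrix (Fin m) (Fin n) ℝ)
    (u γh p₁ : ℝ) (hu : 0 < u) (hγh : 0 < γh) (hp₁ : 0 < p₁) (hγhu : γh < u)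
    (V : Matrix (Fin n) (Fin n) ℝ)
    (hV : specNorm (Vᵀ * V - 1) ≤ p₁ * u) (hp₁u : p₁ * u < 1)
    (ΔA : Matrix (Fin m) (Fin n) ℝ)
    (hΔ : ∀ i j, |ΔA i j| ≤ u * |(A * V) i j| + 2 * γh * ((matAbs A * matAbs V) i j)) :
    frobNorm ΔA ≤ 6 * n * u * specNorm A :=
  perturbation_frobenius_bound_general A u γh p₁ hu hγhu V hV hp₁u ΔA hΔ
end

section
/- Let m ≥ n and let Ã ∈ ℝ^{m×n} have full rank n with columns ã_j. If off(ÃᵀÃ)/min_j ‖ã_j‖₂² ≤ θ for some θ < 1, then κ₂ᴰ(Ã) ≤ (1 + θ)^{1/2}/(1 − θ)^{1/2}. -/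
open scoped BigOperators
open Matrix

/-!
Write `B = A·D(A)`. Its Gram matrix `BᵀB = D·AᵀA·D` has unit diagonal, and the off-diagonal
entries of `AᵀA` are scaled by factors at most `1 / min_j ‖a_j‖²`, so `off(BᵀB) ≤ θ`. If `v` is a
unit eigenvector of `BᵀB` with eigenvalue `λ` and `E` is the off-diagonal part of `BᵀB`, then
`λ - 1 = vᵀEv`, and `|vᵀEv| ≤ ‖E‖_F` by Cauchy–Schwarz. Hence all eigenvalues of `BᵀB` lie in
`[1 - θ, 1 + θ]` and all singular values of `B` in `[√(1 - θ), √(1 + θ)]`.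
-/

lemma frobNorm_le_mul_of_abs_le {m n : ℕ} {A B : Matrix (Fin m) (Fin n) ℝ} {r : ℝ}
    (hr : 0 ≤ r) (h : ∀ i j, |A i j| ≤ r * |B i j|) : frobNorm A ≤ r * frobNorm B := by
  calc frobNorm A ≤ Real.sqrt (∑ i, ∑ j, (r * B i j) ^ 2) := by
        refine Real.sqrt_le_sqrt (Finset.sum_le_sum fun i _ => Finset.sum_le_sum fun j _ => ?_)
        rw [sq_le_sq, abs_mul, abs_of_nonneg hr]
        exact h i j
    _ = r * frobNorm B := by
        simp_rw [mul_pow, ← Finset.mul_sum]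
        rw [Real.sqrt_mul (sq_nonneg r), Real.sqrt_sq hr, frobNorm]

lemma sq_dotProduct_mulVec_le {m n : Type*} [Fintype m] [Fintype n]
    (u : m → ℝ) (E : Matrix m n ℝ) (v : n → ℝ) :
    (u ⬝ᵥ E *ᵥ v) ^ 2 ≤ (u ⬝ᵥ u) * (∑ i, ∑ j, E i j ^ 2) * (v ⬝ᵥ v) := by
  have hprod : u ⬝ᵥ E *ᵥ v = ∑ p : m × n, (u p.1 * v p.2) * E p.1 p.2 := by
    simp only [dotProduct, mulVec, Fintype.sum_prod_type, Finset.mul_sum]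
    exact Finset.sum_congr rfl fun i _ => Finset.sum_congr rfl fun j _ => by ring
  have hnorm : ∑ p : m × n, (u p.1 * v p.2) ^ 2 = (u ⬝ᵥ u) * (v ⬝ᵥ v) := by
    simp only [dotProduct, Fintype.sum_prod_type, Finset.sum_mul_sum, mul_pow]
    exact Finset.sum_congr rfl fun i _ => Finset.sum_congr rfl fun j _ => by ring
  calc (u ⬝ᵥ E *ᵥ v) ^ 2
      ≤ (∑ p : m × n, (u p.1 * v p.2) ^ 2) * ∑ p : m × n, E p.1 p.2 ^ 2 := by
        rw [hprod]; exact Finset.sum_mul_sq_le_sq_mul_sq _ _ _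
    _ = (u ⬝ᵥ u) * (∑ i, ∑ j, E i j ^ 2) * (v ⬝ᵥ v) := by
        rw [hnorm, Fintype.sum_prod_type]; ring

lemma abs_eigenvalues_sub_one_le_offF {n : ℕ} {M : Matrix (Fin n) (Fin n) ℝ}
    (hM : M.IsHermitian) (hdiag : ∀ i, M i i = 1) (k : Fin n) :
    |hM.eigenvalues k - 1| ≤ offF M := by
  set v : Fin n → ℝ := ⇑(hM.eigenvectorBasis k)
  set E := M - diagonal fun i => M i i
  have hv : v ⬝ᵥ v = 1 := by
    have h := real_inner_self_eq_norm_sq (hM.eigenvectorBasis k)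
    rw [hM.eigenvectorBasis.orthonormal.1 k, one_pow, EuclideanSpace.inner_eq_star_dotProduct] at h
    simpa using h
  have hME : M = E + 1 := by
    have hdiag' : (diagonal fun i => M i i) = 1 := by simp [hdiag]
    simp [E, hdiag']
  have heig : hM.eigenvalues k - 1 = v ⬝ᵥ E *ᵥ v := by
    have hquad : hM.eigenvalues k = v ⬝ᵥ M *ᵥ v := by simpa using hM.eigenvalues_eq k
    rw [hquad, hME, add_mulVec, one_mulVec, dotProduct_add, hv, add_sub_cancel_right]
  have hsq := sq_dotProduct_mulVec_le v E v
  rw [hv, one_mul, mul_one] at hsq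
  rw [heig]
  exact Real.abs_le_sqrt hsq

lemma offF_diagonal_mul_mul_diagonal_le {n : ℕ} (M : Matrix (Fin n) (Fin n) ℝ) {d : Fin n → ℝ}
    {r : ℝ} (hd : ∀ i, d i ^ 2 ≤ r) : offF (diagonal d * M * diagonal d) ≤ r * offF M := by
  rcases isEmpty_or_nonempty (Fin n) with hn | ⟨⟨i₀⟩⟩
  · simp [offF, frobNorm]
  have hr : 0 ≤ r := (sq_nonneg _).trans (hd i₀)
  refine frobNorm_le_mul_of_abs_le hr fun i j => ?_
  by_cases hij : i = j
  · subst hij; simp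
  have hdd : |d i * d j| ≤ r := by
    refine abs_le_of_sq_le_sq ?_ hr
    rw [mul_pow, sq r]
    exact mul_le_mul (hd i) (hd j) (sq_nonneg _) hr
  simp only [Matrix.sub_apply, diagonal_apply_ne _ hij, sub_zero, diagonal_mul, mul_diagonal]
  rw [mul_right_comm, abs_mul]
  exact mul_le_mul_of_nonneg_right hdd (abs_nonneg _)

lemma kappa2_le_sqrt_div_sqrt {m n : ℕ} (A : Matrix (Fin m) (Fin n) ℝ) {a b : ℝ} (ha : 0 < a)
    (hlo : ∀ k, a ≤ (isHermitian_conjTranspose_mul_self A).eigenvalues k)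
    (hhi : ∀ k, (isHermitian_conjTranspose_mul_self A).eigenvalues k ≤ b) :
    kappa2 A ≤ Real.sqrt b / Real.sqrt a := by
  rcases isEmpty_or_nonempty (Fin n) with hn | hn
  · simp only [kappa2, specNorm, Real.iSup_of_isEmpty, zero_div]
    positivity
  have hspec : specNorm A ≤ Real.sqrt b := ciSup_le fun k => Real.sqrt_le_sqrt (hhi _)
  have hmin : Real.sqrt a ≤ sMin A := le_ciInf fun k => Real.sqrt_le_sqrt (hlo _)
  exact div_le_div₀ (Real.sqrt_nonneg _) hspec (Real.sqrt_pos.mpr ha) hmin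

lemma vecNorm_pos {m : ℕ} {v : Fin m → ℝ} (hv : v ≠ 0) : 0 < vecNorm v := by
  obtain ⟨i, hi⟩ := Function.ne_iff.mp hv
  exact Real.sqrt_pos.mpr <|
    Finset.sum_pos' (fun i _ => sq_nonneg (v i)) ⟨i, Finset.mem_univ i, sq_pos_of_ne_zero hi⟩

lemma col_ne_zero_of_rank_eq {m n : ℕ} {A : Matrix (Fin m) (Fin n) ℝ} (hA : A.rank = n)
    (j : Fin n) : (fun i => A i j) ≠ 0 := by
  have : LinearIndependent ℝ A.col := by
    rw [linearIndependent_iff_card_eq_finrank_span, Set.finrank, ← rank_eq_finrank_span_cols, hA,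
      Fintype.card_fin]
  exact this.ne_zero j

lemma transpose_mul_colScale {m n : ℕ} (A : Matrix (Fin m) (Fin n) ℝ) :
    (A * colScale A)ᵀ * (A * colScale A) = colScale A * (Aᵀ * A) * colScale A := by
  simp only [colScale, transpose_mul, diagonal_transpose, Matrix.mul_assoc]

lemma transpose_mul_colScale_apply_self {m n : ℕ} {A : Matrix (Fin m) (Fin n) ℝ} {j : Fin n}
    (hj : (fun i => A i j) ≠ 0) : ((A * colScale A)ᵀ * (A * colScale A)) j j = 1 := by
  have hc := (vecNorm_pos hj).ne'
  have hsq : vecNorm (fun i => A i j) ^ 2 = ∑ i, A i j ^ 2 := Real.sq_sqrt (by positivity)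
  have hentry : ∀ i, (A * colScale A) i j ^ 2 = A i j ^ 2 / vecNorm (fun i => A i j) ^ 2 := by
    intro i
    rw [colScale, mul_diagonal, mul_pow, inv_pow, div_eq_mul_inv]
  rw [mul_apply]
  simp_rw [transpose_apply, ← sq, hentry, ← Finset.sum_div, ← hsq]
  exact div_self (pow_ne_zero 2 hc)

lemma offF_transpose_mul_colScale_le {m n : ℕ} {A : Matrix (Fin m) (Fin n) ℝ}
    (hA : ∀ j, (fun i => A i j) ≠ 0) :
    offF ((A * colScale A)ᵀ * (A * colScale A)) ≤
      offF (Aᵀ * A) / ⨅ j, vecNorm (fun i => A i j) ^ 2 := by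
  rw [transpose_mul_colScale, div_eq_inv_mul]
  refine offF_diagonal_mul_mul_diagonal_le _ fun j => ?_
  have : Nonempty (Fin n) := ⟨j⟩
  obtain ⟨j₀, hj₀⟩ := exists_eq_ciInf_of_finite (f := fun j => vecNorm (fun i => A i j) ^ 2)
  rw [inv_pow, ← hj₀]
  exact inv_anti₀ (pow_pos (vecNorm_pos (hA j₀)) 2) (hj₀ ▸ ciInf_le (Finite.bddBelow_range _) j)

theorem scaled_cond_bound_of_off_general
    {m n : ℕ}
    (A : Matrix (Fin m) (Fin n) ℝ) (hrank : A.rank = n)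
    (θ : ℝ) (hθ1 : θ < 1)
    (hθ : offF (Aᵀ * A) / (⨅ j, (vecNorm (fun i => A i j)) ^ 2) ≤ θ) :
    scaledCond A ≤ Real.sqrt (1 + θ) / Real.sqrt (1 - θ) := by
  set B := A * colScale A
  have hcol := col_ne_zero_of_rank_eq hrank
  have hBB : Bᴴ * B = Bᵀ * B := by rw [conjTranspose_eq_transpose_of_trivial]
  have hoff : offF (Bᴴ * B) ≤ θ := hBB ▸ (offF_transpose_mul_colScale_le hcol).trans hθ
  have hdiag : ∀ j, (Bᴴ * B) j j = 1 := fun j => hBB ▸ transpose_mul_colScale_apply_self (hcol j)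
  have heig k := abs_le.mp <|
    (abs_eigenvalues_sub_one_le_offF (isHermitian_conjTranspose_mul_self B) hdiag k).trans hoff
  exact kappa2_le_sqrt_div_sqrt B (sub_pos.mpr hθ1) (fun k => by linarith [heig k])
    (fun k => by linarith [heig k])

/-- Proposition 3.3: a small relative `off` quantity bounds the one-sided
scaled condition number. -/
theorem scaled_cond_bound_of_off
    {m n : ℕ} (hmn : n ≤ m)
    (A : Matrix (Fin m) (Fin n) ℝ) (hrank : A.rank = n)
    (θ : ℝ) (hθ1 : θ < 1)
    (hθ : offF (Aᵀ * A) / (⨅ j, (vecNorm (fun i => A i j)) ^ 2) ≤ θ) :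
    scaledCond A ≤ Real.sqrt (1 + θ) / Real.sqrt (1 - θ) :=
  scaled_cond_bound_of_off_general A hrank θ hθ1 hθ
end

section
/- Let m ≥ n, let A ∈ ℝ^{m×n} have full rank n, and let u_ℓ, u, p₆ be positive reals. Suppose A + ΔA = Ũ_ℓ Σ_ℓ (Ṽ + ΔṼ)ᵀ, where Ũ_ℓ ∈ ℝ^{m×n} has orthonormal columns, Σ_ℓ ∈ ℝ^{n×n} is diagonal with nonnegative entries, Ṽ + ΔṼ ∈ ℝ^{n×n} is orthogonal, and the perturbations satisfy ‖ΔA‖₂ ≤ p₆u_ℓ‖A‖₂, ‖ΔṼ‖₂ ≤ p₆u, and ‖ṼᵀṼ − I‖₂ ≤ p₆u. If 5p₆(u_ℓ + u)κ₂(A) ≤ 1, then the preconditioned matrix Ã = AṼ satisfies κ₂ᴰ(Ã) ≤ 3. -/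
open scoped BigOperators
open Matrix

/-!
Write `W = V + ΔV`, which is orthogonal, so that `(A + ΔA) W = Uℓ Σ`. Then
`A V - Uℓ Σ = -(A ΔV + ΔA W)` has norm at most `‖A‖ ‖ΔV‖ + ‖ΔA‖ ≤ σ_min(A) / 5`, while
`‖Σ y‖ = ‖(A + ΔA) W y‖ ≥ 4/5 σ_min(A) ‖y‖`. So `A V` is within relative distance `1/4` of
`Uℓ Σ`, whose columns are orthogonal with norms `|σ_j|`. Every column norm of `A V` is then within
a factor in `[3/4, 5/4]` of `|σ_j|`, so with the column scaling `D` we get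
`3/5 ‖y‖ ≤ ‖A V D y‖ ≤ 5/3 ‖y‖`, and `κ₂ᴰ(A V) ≤ (5/3)² < 3`.
-/

section VecNorm

variable {k : ℕ}

lemma vecNorm_eq_norm (v : Fin k → ℝ) : vecNorm v = ‖WithLp.toLp 2 v‖ := by
  simp [vecNorm, EuclideanSpace.norm_eq]

lemma vecNorm_nonneg (v : Fin k → ℝ) : 0 ≤ vecNorm v := Real.sqrt_nonneg _

lemma sq_vecNorm (v : Fin k → ℝ) : vecNorm v ^ 2 = v ⬝ᵥ v := by
  rw [vecNorm, Real.sq_sqrt (by positivity)]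
  simp [dotProduct, sq]

lemma vecNorm_add_le (v w : Fin k → ℝ) : vecNorm (v + w) ≤ vecNorm v + vecNorm w := by
  simpa only [vecNorm_eq_norm, WithLp.toLp_add] using norm_add_le _ _

lemma abs_vecNorm_sub_vecNorm_le (v w : Fin k → ℝ) :
    |vecNorm v - vecNorm w| ≤ vecNorm (v - w) := by
  simpa only [vecNorm_eq_norm, WithLp.toLp_sub] using abs_norm_sub_norm_le _ _

@[simp] lemma vecNorm_neg (v : Fin k → ℝ) : vecNorm (-v) = vecNorm v := by simp [vecNorm]

lemma vecNorm_single (j : Fin k) (a : ℝ) : vecNorm (Pi.single j a) = |a| := by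
  simp [vecNorm_eq_norm]

lemma vecNorm_diagonal_mulVec_single (d : Fin k → ℝ) (j : Fin k) :
    vecNorm (diagonal d *ᵥ Pi.single j 1) = |d j| := by
  rw [diagonal_mulVec_single, mul_one, vecNorm_single]

lemma vecNorm_diagonal_mulVec_le {d : Fin k → ℝ} {b : ℝ} (hb : 0 ≤ b) (h : ∀ j, |d j| ≤ b)
    (x : Fin k → ℝ) : vecNorm (diagonal d *ᵥ x) ≤ b * vecNorm x := by
  refine le_of_pow_le_pow_left₀ two_ne_zero (mul_nonneg hb (vecNorm_nonneg x)) ?_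
  rw [mul_pow, sq_vecNorm, sq_vecNorm]
  simp only [dotProduct, mulVec_diagonal, Finset.mul_sum]
  refine Finset.sum_le_sum fun j _ => ?_
  have : d j ^ 2 ≤ b ^ 2 := by simpa only [sq_abs] using pow_le_pow_left₀ (abs_nonneg _) (h j) 2
  nlinarith [mul_self_nonneg (x j)]

lemma le_vecNorm_diagonal_mulVec {d : Fin k → ℝ} {a : ℝ} (ha : 0 ≤ a) (h : ∀ j, a ≤ |d j|)
    (x : Fin k → ℝ) : a * vecNorm x ≤ vecNorm (diagonal d *ᵥ x) := by
  refine le_of_pow_le_pow_left₀ two_ne_zero (vecNorm_nonneg _) ?_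
  rw [mul_pow, sq_vecNorm, sq_vecNorm]
  simp only [dotProduct, mulVec_diagonal, Finset.mul_sum]
  refine Finset.sum_le_sum fun j _ => ?_
  have : a ^ 2 ≤ d j ^ 2 := by simpa only [sq_abs] using pow_le_pow_left₀ ha (h j) 2
  nlinarith [mul_self_nonneg (x j)]

lemma vecNorm_mulVec_of_transpose_mul_self_eq_one {l : ℕ} {U : Matrix (Fin k) (Fin l) ℝ}
    (hU : Uᵀ * U = 1) (x : Fin l → ℝ) : vecNorm (U *ᵥ x) = vecNorm x := by
  rw [← sq_eq_sq₀ (vecNorm_nonneg _) (vecNorm_nonneg _), sq_vecNorm, sq_vecNorm,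
    dotProduct_mulVec, vecMul_mulVec, hU, vecMul_one]

end VecNorm

section Rayleigh

open scoped RealInnerProductSpace

variable {ι : Type*} [Fintype ι]

lemma dotProduct_self_eq_sq_norm (x : ι → ℝ) : x ⬝ᵥ x = ‖WithLp.toLp 2 x‖ ^ 2 := by
  rw [EuclideanSpace.real_norm_sq_eq]
  simp [dotProduct, sq]

namespace Matrix

variable [DecidableEq ι] {M : Matrix ι ι ℝ}

lemma IsHermitian.dotProduct_mulVec_eq_sum (hM : M.IsHermitian) (x : ι → ℝ) :
    x ⬝ᵥ (M *ᵥ x) =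
      ∑ i, hM.eigenvalues i * ⟪hM.eigenvectorBasis i, WithLp.toLp 2 x⟫ ^ 2 := by
  set b := hM.eigenvectorBasis
  have hb : ∀ i, ⟪b i, WithLp.toLp 2 (M *ᵥ x)⟫ = hM.eigenvalues i * ⟪b i, WithLp.toLp 2 x⟫ := by
    intro i
    simp only [EuclideanSpace.inner_eq_star_dotProduct, star_trivial]
    rw [dotProduct_comm, dotProduct_mulVec, ← mulVec_transpose,
      ← conjTranspose_eq_transpose_of_trivial, hM.eq, hM.mulVec_eigenvectorBasis,
      smul_dotProduct, smul_eq_mul, dotProduct_comm]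
  calc x ⬝ᵥ (M *ᵥ x) = ⟪WithLp.toLp 2 x, WithLp.toLp 2 (M *ᵥ x)⟫ := by
        simp [EuclideanSpace.inner_eq_star_dotProduct, dotProduct_comm]
    _ = _ := by
        rw [← b.sum_inner_mul_inner]
        congr! 1 with i
        rw [hb, real_inner_comm]; ring

lemma IsHermitian.dotProduct_mulVec_le (hM : M.IsHermitian) {β : ℝ}
    (h : ∀ i, hM.eigenvalues i ≤ β) (x : ι → ℝ) : x ⬝ᵥ (M *ᵥ x) ≤ β * (x ⬝ᵥ x) := by
  rw [hM.dotProduct_mulVec_eq_sum, dotProduct_self_eq_sq_norm,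
    ← hM.eigenvectorBasis.sum_sq_inner_right, Finset.mul_sum]
  gcongr with i
  exact h i

lemma IsHermitian.le_dotProduct_mulVec (hM : M.IsHermitian) {α : ℝ}
    (h : ∀ i, α ≤ hM.eigenvalues i) (x : ι → ℝ) : α * (x ⬝ᵥ x) ≤ x ⬝ᵥ (M *ᵥ x) := by
  rw [hM.dotProduct_mulVec_eq_sum, dotProduct_self_eq_sq_norm,
    ← hM.eigenvectorBasis.sum_sq_inner_right, Finset.mul_sum]
  gcongr with i
  exact h i

end Matrix

end Rayleigh

section SingularValues

variable {m n : ℕ} (B : Matrix (Fin m) (Fin n) ℝ)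

noncomputable abbrev gramEigenvalues : Fin n → ℝ :=
  (isHermitian_conjTranspose_mul_self B).eigenvalues

lemma specNorm_eq_iSup : specNorm B = ⨆ i, √(gramEigenvalues B i) :=
  (Fin.revPerm.trans (Tuple.sort (gramEigenvalues B))).iSup_comp
    (g := fun i => √(gramEigenvalues B i))

lemma sMin_eq_iInf : sMin B = ⨅ i, √(gramEigenvalues B i) :=
  (Fin.revPerm.trans (Tuple.sort (gramEigenvalues B))).iInf_comp
    (g := fun i => √(gramEigenvalues B i))

lemma gramEigenvalues_nonneg (i : Fin n) : 0 ≤ gramEigenvalues B i :=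
  eigenvalues_conjTranspose_mul_self_nonneg B i

lemma specNorm_nonneg_s15 : 0 ≤ specNorm B := by
  rw [specNorm_eq_iSup]; exact Real.iSup_nonneg fun _ => Real.sqrt_nonneg _

lemma sMin_nonneg : 0 ≤ sMin B := by
  rw [sMin_eq_iInf]; exact Real.iInf_nonneg fun _ => Real.sqrt_nonneg _

lemma sq_vecNorm_mulVec (x : Fin n → ℝ) :
    vecNorm (B *ᵥ x) ^ 2 = x ⬝ᵥ ((Bᴴ * B) *ᵥ x) := by
  rw [sq_vecNorm, ← mulVec_mulVec, conjTranspose_eq_transpose_of_trivial, dotProduct_mulVec x,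
    vecMul_transpose]

lemma sqrt_gramEigenvalues_le_specNorm (i : Fin n) : √(gramEigenvalues B i) ≤ specNorm B := by
  rw [specNorm_eq_iSup]
  exact le_ciSup (Finite.bddAbove_range fun i => √(gramEigenvalues B i)) i

lemma sMin_le_sqrt_gramEigenvalues (i : Fin n) : sMin B ≤ √(gramEigenvalues B i) := by
  rw [sMin_eq_iInf]
  exact ciInf_le (Finite.bddBelow_range fun i => √(gramEigenvalues B i)) i

lemma vecNorm_mulVec_le (x : Fin n → ℝ) : vecNorm (B *ᵥ x) ≤ specNorm B * vecNorm x := by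
  have hle (i : Fin n) : gramEigenvalues B i ≤ specNorm B ^ 2 := by
    rw [← Real.sq_sqrt (gramEigenvalues_nonneg B i)]
    gcongr
    exact sqrt_gramEigenvalues_le_specNorm B i
  refine le_of_pow_le_pow_left₀ two_ne_zero (mul_nonneg (specNorm_nonneg_s15 B) (vecNorm_nonneg x)) ?_
  rw [sq_vecNorm_mulVec, mul_pow, sq_vecNorm]
  exact (isHermitian_conjTranspose_mul_self B).dotProduct_mulVec_le hle x

lemma sMin_mul_vecNorm_le (x : Fin n → ℝ) : sMin B * vecNorm x ≤ vecNorm (B *ᵥ x) := by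
  have hle (i : Fin n) : sMin B ^ 2 ≤ gramEigenvalues B i := by
    rw [← Real.sq_sqrt (gramEigenvalues_nonneg B i)]
    gcongr
    · exact sMin_nonneg B
    · exact sMin_le_sqrt_gramEigenvalues B i
  refine le_of_pow_le_pow_left₀ two_ne_zero (vecNorm_nonneg _) ?_
  rw [sq_vecNorm_mulVec, mul_pow, sq_vecNorm]
  exact (isHermitian_conjTranspose_mul_self B).le_dotProduct_mulVec hle x

lemma vecNorm_eigenvectorBasis (i : Fin n) :
    vecNorm ⇑((isHermitian_conjTranspose_mul_self B).eigenvectorBasis i) = 1 := by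
  rw [vecNorm_eq_norm]
  exact (isHermitian_conjTranspose_mul_self B).eigenvectorBasis.orthonormal.1 i

lemma gramEigenvalues_eq_sq_vecNorm (i : Fin n) :
    gramEigenvalues B i =
      vecNorm (B *ᵥ ⇑((isHermitian_conjTranspose_mul_self B).eigenvectorBasis i)) ^ 2 := by
  rw [sq_vecNorm_mulVec, (isHermitian_conjTranspose_mul_self B).mulVec_eigenvectorBasis,
    dotProduct_smul, ← sq_vecNorm, vecNorm_eigenvectorBasis, smul_eq_mul, one_pow, mul_one]

lemma kappa2_le_div [Nonempty (Fin n)] {α β : ℝ} (hα : 0 < α)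
    (hlow : ∀ x, α * vecNorm x ≤ vecNorm (B *ᵥ x)) (hup : ∀ x, vecNorm (B *ᵥ x) ≤ β * vecNorm x) :
    kappa2 B ≤ β / α := by
  have hsqrt (i : Fin n) : α ≤ √(gramEigenvalues B i) ∧ √(gramEigenvalues B i) ≤ β := by
    rw [gramEigenvalues_eq_sq_vecNorm, Real.sqrt_sq (vecNorm_nonneg _)]
    have h₁ := hlow ⇑((isHermitian_conjTranspose_mul_self B).eigenvectorBasis i)
    have h₂ := hup ⇑((isHermitian_conjTranspose_mul_self B).eigenvectorBasis i)
    rw [vecNorm_eigenvectorBasis, mul_one] at h₁ h₂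
    exact ⟨h₁, h₂⟩
  have hspec : specNorm B ≤ β := by
    rw [specNorm_eq_iSup]; exact ciSup_le fun i => (hsqrt i).2
  have hmin : α ≤ sMin B := by
    rw [sMin_eq_iInf]; exact le_ciInf fun i => (hsqrt i).1
  have hβ : 0 ≤ β := hα.le.trans ((hsqrt (Classical.arbitrary _)).1.trans (hsqrt _).2)
  exact div_le_div₀ hβ hspec hα hmin

lemma gramEigenvalues_ne_zero_of_rank_eq (h : B.rank = n) (i : Fin n) :
    gramEigenvalues B i ≠ 0 := by
  intro hi
  have hlt := Fintype.card_subtype_lt (p := fun j => gramEigenvalues B j ≠ 0) (not_not.mpr hi)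
  rw [← (isHermitian_conjTranspose_mul_self B).rank_eq_card_non_zero_eigs,
    rank_conjTranspose_mul_self, h, Fintype.card_fin] at hlt
  exact hlt.false

lemma sMin_pos_of_rank_eq [Nonempty (Fin n)] (h : B.rank = n) : 0 < sMin B := by
  obtain ⟨i, hi⟩ := exists_eq_ciInf_of_finite (f := fun i => √(gramEigenvalues B i))
  rw [sMin_eq_iInf, ← hi, Real.sqrt_pos]
  exact (gramEigenvalues_nonneg B i).lt_of_ne' (gramEigenvalues_ne_zero_of_rank_eq B h i)

end SingularValues

section ColumnScaling

variable {m n : ℕ} [Nonempty (Fin n)]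

lemma scaledCond_le_div_sq (B : Matrix (Fin m) (Fin n) ℝ) {d : Fin n → ℝ} {a b : ℝ}
    (ha : 0 < a) (hd : ∀ j, d j ≠ 0)
    (hlow : ∀ y, a * vecNorm (diagonal d *ᵥ y) ≤ vecNorm (B *ᵥ y))
    (hup : ∀ y, vecNorm (B *ᵥ y) ≤ b * vecNorm (diagonal d *ᵥ y)) :
    scaledCond B ≤ (b / a) ^ 2 := by
  set c : Fin n → ℝ := fun j => vecNorm (B *ᵥ Pi.single j 1)
  have hcol : colScale B = diagonal c⁻¹ := by
    simp only [colScale, c, mulVec_single_one]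
    rfl
  have hcd (j : Fin n) : a * |d j| ≤ c j ∧ c j ≤ b * |d j| := by
    have h₁ := hlow (Pi.single j 1)
    have h₂ := hup (Pi.single j 1)
    rw [vecNorm_diagonal_mulVec_single] at h₁ h₂
    exact ⟨h₁, h₂⟩
  have hdpos (j : Fin n) : 0 < |d j| := abs_pos.mpr (hd j)
  have hcpos (j : Fin n) : 0 < c j := (mul_pos ha (hdpos j)).trans_le (hcd j).1
  have hb : 0 < b := by
    obtain ⟨j⟩ := ‹Nonempty (Fin n)›
    exact pos_of_mul_pos_left ((hcpos j).trans_le (hcd j).2) (hdpos j).le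
  have hratio (j : Fin n) : b⁻¹ ≤ |(d * c⁻¹) j| ∧ |(d * c⁻¹) j| ≤ a⁻¹ := by
    rw [Pi.mul_apply, Pi.inv_apply, abs_mul, abs_inv, abs_of_pos (hcpos j), ← div_eq_mul_inv,
      le_div_iff₀ (hcpos j), div_le_iff₀ (hcpos j), inv_mul_le_iff₀ hb, le_inv_mul_iff₀ ha]
    exact (hcd j).symm
  have hscaled (x : Fin n → ℝ) : (B * colScale B) *ᵥ x = B *ᵥ (diagonal c⁻¹ *ᵥ x) := by
    rw [hcol, mulVec_mulVec]
  have hdiag (x : Fin n → ℝ) :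
      diagonal d *ᵥ (diagonal c⁻¹ *ᵥ x) = diagonal (d * c⁻¹) *ᵥ x := by
    rw [mulVec_mulVec, diagonal_mul_diagonal]; rfl
  have hlow' (x : Fin n → ℝ) : a / b * vecNorm x ≤ vecNorm ((B * colScale B) *ᵥ x) := by
    calc a / b * vecNorm x = a * (b⁻¹ * vecNorm x) := by ring
      _ ≤ a * vecNorm (diagonal (d * c⁻¹) *ᵥ x) := by
          gcongr; exact le_vecNorm_diagonal_mulVec (by positivity) (fun j => (hratio j).1) x
      _ ≤ _ := by rw [hscaled, ← hdiag]; exact hlow _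
  have hup' (x : Fin n → ℝ) : vecNorm ((B * colScale B) *ᵥ x) ≤ b / a * vecNorm x := by
    calc vecNorm ((B * colScale B) *ᵥ x) ≤ b * vecNorm (diagonal (d * c⁻¹) *ᵥ x) := by
          rw [hscaled, ← hdiag]; exact hup _
      _ ≤ b * (a⁻¹ * vecNorm x) := by
          gcongr; exact vecNorm_diagonal_mulVec_le (by positivity) (fun j => (hratio j).2) x
      _ = b / a * vecNorm x := by ring
  calc scaledCond B ≤ (b / a) / (a / b) := kappa2_le_div _ (div_pos ha hb) hlow' hup'
    _ = (b / a) ^ 2 := by field_simp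

lemma scaledCond_le_of_vecNorm_sub_le {B U : Matrix (Fin m) (Fin n) ℝ} (hU : Uᵀ * U = 1)
    {d : Fin n → ℝ} (hd : ∀ j, d j ≠ 0) {ε : ℝ} (hε : ε < 1)
    (h : ∀ y, vecNorm ((B - U * diagonal d) *ᵥ y) ≤ ε * vecNorm (diagonal d *ᵥ y)) :
    scaledCond B ≤ ((1 + ε) / (1 - ε)) ^ 2 := by
  have key (y : Fin n → ℝ) :
      |vecNorm (B *ᵥ y) - vecNorm (diagonal d *ᵥ y)| ≤ ε * vecNorm (diagonal d *ᵥ y) := by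
    have := abs_vecNorm_sub_vecNorm_le (B *ᵥ y) (U *ᵥ (diagonal d *ᵥ y))
    rw [vecNorm_mulVec_of_transpose_mul_self_eq_one hU, mulVec_mulVec, ← sub_mulVec] at this
    exact this.trans (h y)
  refine scaledCond_le_div_sq B (sub_pos.2 hε) hd (fun y => ?_) (fun y => ?_)
  · linarith [(abs_le.mp (key y)).1]
  · linarith [(abs_le.mp (key y)).2]

end ColumnScaling

section Factorization

variable {m n : ℕ} {A ΔA U : Matrix (Fin m) (Fin n) ℝ} {σ : Fin n → ℝ}

lemma sMin_sub_specNorm_mul_le_vecNorm_diagonal_mulVec {W : Matrix (Fin n) (Fin n) ℝ}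
    (hU : Uᵀ * U = 1) (hW : Wᵀ * W = 1) (hfact : (A + ΔA) * W = U * diagonal σ) (y : Fin n → ℝ) :
    (sMin A - specNorm ΔA) * vecNorm y ≤ vecNorm (diagonal σ *ᵥ y) := by
  set z := W *ᵥ y
  have hσ : vecNorm (diagonal σ *ᵥ y) = vecNorm (A *ᵥ z + ΔA *ᵥ z) := by
    rw [← vecNorm_mulVec_of_transpose_mul_self_eq_one hU, mulVec_mulVec, ← hfact,
      ← mulVec_mulVec, add_mulVec]
  have hA := sMin_mul_vecNorm_le A z
  have hΔA := vecNorm_mulVec_le ΔA z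
  have htri := abs_vecNorm_sub_vecNorm_le (A *ᵥ z + ΔA *ᵥ z) (A *ᵥ z)
  rw [add_sub_cancel_left] at htri
  rw [vecNorm_mulVec_of_transpose_mul_self_eq_one hW] at hA hΔA
  rw [hσ]
  linarith [(abs_le.mp htri).1]

lemma vecNorm_mul_sub_mulVec_le {V ΔV : Matrix (Fin n) (Fin n) ℝ}
    (hW : (V + ΔV)ᵀ * (V + ΔV) = 1) (hfact : (A + ΔA) * (V + ΔV) = U * diagonal σ)
    (y : Fin n → ℝ) :
    vecNorm ((A * V - U * diagonal σ) *ᵥ y) ≤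
      (specNorm A * specNorm ΔV + specNorm ΔA) * vecNorm y := by
  have hdiff : A * V - U * diagonal σ = -(A * ΔV + ΔA * (V + ΔV)) := by
    rw [← hfact, Matrix.add_mul, Matrix.mul_add A]; abel
  have hΔV := vecNorm_mulVec_le ΔV y
  have hΔA := vecNorm_mulVec_le ΔA ((V + ΔV) *ᵥ y)
  rw [vecNorm_mulVec_of_transpose_mul_self_eq_one hW] at hΔA
  rw [hdiff, neg_mulVec, vecNorm_neg, add_mulVec, ← mulVec_mulVec, ← mulVec_mulVec]
  calc _ ≤ vecNorm (A *ᵥ (ΔV *ᵥ y)) + vecNorm (ΔA *ᵥ ((V + ΔV) *ᵥ y)) := vecNorm_add_le _ _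
    _ ≤ specNorm A * (specNorm ΔV * vecNorm y) + specNorm ΔA * vecNorm y := by
        gcongr
        exact (vecNorm_mulVec_le A _).trans (by gcongr; exact specNorm_nonneg_s15 A)
    _ = _ := by ring

end Factorization

theorem scaled_cond_le_three_general
    {m n : ℕ}
    (A : Matrix (Fin m) (Fin n) ℝ) (hrank : A.rank = n)
    (uℓ u p₆ : ℝ)
    (ΔA : Matrix (Fin m) (Fin n) ℝ)
    (Uℓ : Matrix (Fin m) (Fin n) ℝ) (σd : Fin n → ℝ)
    (V ΔV : Matrix (Fin n) (Fin n) ℝ)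
    (hUℓ : Uℓᵀ * Uℓ = 1)
    (horth : (V + ΔV)ᵀ * (V + ΔV) = 1)
    (hfact : A + ΔA = Uℓ * Matrix.diagonal σd * (V + ΔV)ᵀ)
    (hΔA : specNorm ΔA ≤ p₆ * uℓ * specNorm A)
    (hΔV : specNorm ΔV ≤ p₆ * u)
    (hcond : 5 * p₆ * (uℓ + u) * kappa2 A ≤ 1) :
    scaledCond (A * V) ≤ 3 := by
  obtain hn | hn := isEmpty_or_nonempty (Fin n)
  · simp [scaledCond, kappa2, specNorm, sMin]
  have hs : 0 < sMin A := sMin_pos_of_rank_eq A hrank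
  have hsvd : (A + ΔA) * (V + ΔV) = Uℓ * diagonal σd := by
    rw [hfact, Matrix.mul_assoc, horth, Matrix.mul_one]
  have hpert : specNorm A * specNorm ΔV + specNorm ΔA ≤ sMin A / 5 := by
    rw [kappa2, mul_div_assoc', div_le_one hs] at hcond
    nlinarith [mul_le_mul_of_nonneg_left hΔV (specNorm_nonneg_s15 A)]
  have hσ (y : Fin n → ℝ) : 4 / 5 * sMin A * vecNorm y ≤ vecNorm (diagonal σd *ᵥ y) := by
    refine le_trans (mul_le_mul_of_nonneg_right ?_ (vecNorm_nonneg y))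
      (sMin_sub_specNorm_mul_le_vecNorm_diagonal_mulVec hUℓ horth hsvd y)
    nlinarith [mul_nonneg (specNorm_nonneg_s15 A) (specNorm_nonneg_s15 ΔV)]
  have hσ_ne (j : Fin n) : σd j ≠ 0 := by
    have := hσ (Pi.single j 1)
    rw [vecNorm_diagonal_mulVec_single, vecNorm_single, abs_one] at this
    exact abs_pos.mp (by linarith)
  have hclose (y : Fin n → ℝ) :
      vecNorm ((A * V - Uℓ * diagonal σd) *ᵥ y) ≤ 1 / 4 * vecNorm (diagonal σd *ᵥ y) :=
    calc _ ≤ (specNorm A * specNorm ΔV + specNorm ΔA) * vecNorm y :=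
          vecNorm_mul_sub_mulVec_le horth hsvd y
      _ ≤ sMin A / 5 * vecNorm y := by gcongr; exact vecNorm_nonneg y
      _ ≤ _ := by linarith [hσ y]
  calc scaledCond (A * V) ≤ ((1 + 1 / 4) / (1 - 1 / 4)) ^ 2 :=
        scaledCond_le_of_vecNorm_sub_le hUℓ hσ_ne (by norm_num) hclose
    _ ≤ 3 := by norm_num

/-- Proposition 3.6: if the backward error of the low-precision SVD is small
enough relative to `κ₂(A)`, then the preconditioned matrix satisfies
`κ₂ᴰ(Ã) ≤ 3`. -/
theorem scaled_cond_le_three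
    {m n : ℕ} (hmn : n ≤ m)
    (A : Matrix (Fin m) (Fin n) ℝ) (hrank : A.rank = n)
    (uℓ u p₆ : ℝ) (huℓ : 0 < uℓ) (hu : 0 < u) (hp₆ : 0 < p₆)
    (ΔA : Matrix (Fin m) (Fin n) ℝ)
    (Uℓ : Matrix (Fin m) (Fin n) ℝ) (σd : Fin n → ℝ)
    (V ΔV : Matrix (Fin n) (Fin n) ℝ)
    (hUℓ : Uℓᵀ * Uℓ = 1)
    (hσd : ∀ i, 0 ≤ σd i)
    (horth : (V + ΔV)ᵀ * (V + ΔV) = 1)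
    (hfact : A + ΔA = Uℓ * Matrix.diagonal σd * (V + ΔV)ᵀ)
    (hΔA : specNorm ΔA ≤ p₆ * uℓ * specNorm A)
    (hΔV : specNorm ΔV ≤ p₆ * u)
    (hV : specNorm (Vᵀ * V - 1) ≤ p₆ * u)
    (hcond : 5 * p₆ * (uℓ + u) * kappa2 A ≤ 1) :
    scaledCond (A * V) ≤ 3 :=
  scaled_cond_le_three_general A hrank uℓ u p₆ ΔA Uℓ σd V ΔV hUℓ horth hfact hΔA hΔV hcond
end

section
/- Let Ã ∈ ℝ^{m×n} with columns ã_j, and suppose Ã + ΔÃ = Q R̂, where Q ∈ ℝ^{m×m} is orthogonal, R̂ ∈ ℝ^{m×n}, and ‖ΔÃ e_j‖₂ ≤ γ‖Ã e_j‖₂ for every column index j, with 0 ≤ γ ≤ 1. Then off(R̂ᵀR̂) ≤ off(ÃᵀÃ) + 3n^{3/2}·γ·‖ÃᵀÃ‖_F. -/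
open scoped BigOperators
open Matrix

/-!
Since `Q` is orthogonal, `R̂ᵀR̂ = (Ã + ΔÃ)ᵀ(Ã + ΔÃ) = ÃᵀÃ + E` with `E = ÃᵀΔÃ + ΔÃᵀÃ + ΔÃᵀΔÃ`.
By Cauchy–Schwarz and the columnwise bound, `|E i j| ≤ (2γ + γ²) ‖ã_i‖ ‖ã_j‖ ≤ 3γ ‖ã_i‖ ‖ã_j‖`,
so `‖E‖_F ≤ 3γ ∑ ‖ã_j‖² = 3γ tr(ÃᵀÃ) ≤ 3γ √n ‖ÃᵀÃ‖_F`, and `off` is `‖E‖_F`-Lipschitz.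
-/

lemma vecNorm_sq {m : ℕ} (v : Fin m → ℝ) : vecNorm v ^ 2 = ∑ i, v i ^ 2 :=
  Real.sq_sqrt (by positivity)

lemma abs_sum_mul_le_vecNorm_mul {m : ℕ} (u v : Fin m → ℝ) :
    |∑ i, u i * v i| ≤ vecNorm u * vecNorm v := by
  rw [vecNorm, vecNorm, ← Real.sqrt_mul (by positivity)]
  exact Real.abs_le_sqrt (Finset.sum_mul_sq_le_sq_mul_sq _ u v)

lemma abs_transpose_mul_apply_le {m n p : ℕ} (A : Matrix (Fin m) (Fin n) ℝ)
    (B : Matrix (Fin m) (Fin p) ℝ) (i : Fin n) (j : Fin p) :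
    |(Aᵀ * B) i j| ≤ vecNorm (fun k => A k i) * vecNorm (fun k => B k j) :=
  abs_sum_mul_le_vecNorm_mul _ _

lemma vecNorm_col_sq {m n : ℕ} (A : Matrix (Fin m) (Fin n) ℝ) (j : Fin n) :
    vecNorm (fun k => A k j) ^ 2 = (Aᵀ * A) j j := by
  rw [vecNorm_sq]
  simp [Matrix.mul_apply, sq]

section Frobenius

attribute [local instance] Matrix.frobeniusNormedAddCommGroup

lemma frobNorm_eq_norm {m n : ℕ} (A : Matrix (Fin m) (Fin n) ℝ) : frobNorm A = ‖A‖ := by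
  simp [frobNorm, Matrix.frobenius_norm_def, Real.sqrt_eq_rpow]

lemma frobNorm_add_le {m n : ℕ} (A B : Matrix (Fin m) (Fin n) ℝ) :
    frobNorm (A + B) ≤ frobNorm A + frobNorm B := by
  simpa only [frobNorm_eq_norm] using norm_add_le A B

end Frobenius

lemma offF_le_frobNorm {n : ℕ} (M : Matrix (Fin n) (Fin n) ℝ) : offF M ≤ frobNorm M := by
  refine Real.sqrt_le_sqrt (Finset.sum_le_sum fun i _ => Finset.sum_le_sum fun j _ => ?_)
  rcases eq_or_ne i j with rfl | hij
  · simp [sq_nonneg]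
  · simp [Matrix.diagonal_apply_ne _ hij]

lemma offF_add_le {n : ℕ} (M E : Matrix (Fin n) (Fin n) ℝ) :
    offF (M + E) ≤ offF M + frobNorm E := by
  have hsplit : M + E - Matrix.diagonal (fun i => (M + E) i i)
      = (M - Matrix.diagonal fun i => M i i) + (E - Matrix.diagonal fun i => E i i) := by
    ext i j
    simp only [Matrix.sub_apply, Matrix.add_apply, Matrix.diagonal_apply]
    split_ifs <;> ring
  calc offF (M + E) ≤ offF M + offF E := by
        rw [offF, hsplit]
        exact frobNorm_add_le _ _
    _ ≤ offF M + frobNorm E := by gcongr; exact offF_le_frobNorm E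

lemma frobNorm_le_of_abs_le_mul {n : ℕ} (M : Matrix (Fin n) (Fin n) ℝ) (c : Fin n → ℝ)
    {t : ℝ} (ht : 0 ≤ t) (hM : ∀ i j, |M i j| ≤ t * (c i * c j)) :
    frobNorm M ≤ t * ∑ i, c i ^ 2 := by
  have hsq : ∑ i, ∑ j, (t * (c i * c j)) ^ 2 = (t * ∑ i, c i ^ 2) ^ 2 := by
    simp_rw [mul_pow, sq (∑ i, c i ^ 2), Finset.sum_mul_sum, Finset.mul_sum]
  rw [← Real.sqrt_sq (by positivity : 0 ≤ t * ∑ i, c i ^ 2), ← hsq]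
  refine Real.sqrt_le_sqrt (Finset.sum_le_sum fun i _ => Finset.sum_le_sum fun j _ => ?_)
  simpa only [sq_abs] using pow_le_pow_left₀ (abs_nonneg _) (hM i j) 2

lemma trace_le_sqrt_card_mul_frobNorm {n : ℕ} (M : Matrix (Fin n) (Fin n) ℝ) :
    M.trace ≤ Real.sqrt n * frobNorm M := by
  have hdiag : ∑ i, M i i ^ 2 ≤ ∑ i, ∑ j, M i j ^ 2 :=
    Finset.sum_le_sum fun i _ =>
      Finset.single_le_sum (f := fun j => M i j ^ 2) (fun _ _ => sq_nonneg _) (Finset.mem_univ i)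
  rw [frobNorm, ← Real.sqrt_mul (Nat.cast_nonneg n)]
  refine (le_abs_self _).trans (Real.abs_le_sqrt ?_)
  calc M.trace ^ 2 ≤ n * ∑ i, M i i ^ 2 := by
        have h := sq_sum_le_card_mul_sum_sq (s := Finset.univ) (f := fun i => M i i)
        rwa [Finset.card_univ, Fintype.card_fin] at h
    _ ≤ n * ∑ i, ∑ j, M i j ^ 2 := mul_le_mul_of_nonneg_left hdiag (Nat.cast_nonneg n)

lemma sqrt_natCast_le_rpow_three_halves (n : ℕ) : Real.sqrt n ≤ (n : ℝ) ^ ((3 : ℝ) / 2) := by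
  rcases Nat.eq_zero_or_pos n with rfl | hn
  · simp
  · rw [Real.sqrt_eq_rpow]
    exact Real.rpow_le_rpow_of_exponent_le (by exact_mod_cast hn) (by norm_num)

lemma transpose_mul_self_of_orthogonal {m n : ℕ} {Q : Matrix (Fin m) (Fin m) ℝ}
    (hQ : Qᵀ * Q = 1) (R : Matrix (Fin m) (Fin n) ℝ) : (Q * R)ᵀ * (Q * R) = Rᵀ * R := by
  rw [Matrix.transpose_mul, Matrix.mul_assoc, ← Matrix.mul_assoc Qᵀ, hQ, Matrix.one_mul]

lemma abs_gram_add_sub_gram_apply_le {m n : ℕ} (A ΔA : Matrix (Fin m) (Fin n) ℝ) {γ : ℝ}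
    (hγ0 : 0 ≤ γ) (hγ1 : γ ≤ 1)
    (hcols : ∀ j, vecNorm (fun i => ΔA i j) ≤ γ * vecNorm (fun i => A i j)) (i j : Fin n) :
    |((A + ΔA)ᵀ * (A + ΔA) - Aᵀ * A) i j|
      ≤ 3 * γ * (vecNorm (fun k => A k i) * vecNorm (fun k => A k j)) := by
  set a := vecNorm (fun k => A k i)
  set b := vecNorm (fun k => A k j)
  have ha : 0 ≤ a := Real.sqrt_nonneg _
  have hb : 0 ≤ b := Real.sqrt_nonneg _
  have hexpand : ((A + ΔA)ᵀ * (A + ΔA) - Aᵀ * A) i j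
      = (Aᵀ * ΔA) i j + (ΔAᵀ * A) i j + (ΔAᵀ * ΔA) i j := by
    simp only [Matrix.transpose_add, Matrix.add_mul, Matrix.mul_add, Matrix.sub_apply,
      Matrix.add_apply]
    ring
  have h1 : |(Aᵀ * ΔA) i j| ≤ a * (γ * b) :=
    (abs_transpose_mul_apply_le _ _ i j).trans (mul_le_mul_of_nonneg_left (hcols j) ha)
  have h2 : |(ΔAᵀ * A) i j| ≤ γ * a * b :=
    (abs_transpose_mul_apply_le _ _ i j).trans (mul_le_mul_of_nonneg_right (hcols i) hb)
  have h3 : |(ΔAᵀ * ΔA) i j| ≤ γ * a * (γ * b) :=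
    (abs_transpose_mul_apply_le _ _ i j).trans
      (mul_le_mul (hcols i) (hcols j) (Real.sqrt_nonneg _) (by positivity))
  have hγsq : γ * γ ≤ γ := mul_le_of_le_one_left hγ0 hγ1
  rw [hexpand]
  calc _ ≤ |(Aᵀ * ΔA) i j| + |(ΔAᵀ * A) i j| + |(ΔAᵀ * ΔA) i j| := abs_add_three _ _ _
    _ ≤ (2 * γ + γ * γ) * (a * b) := by linarith
    _ ≤ 3 * γ * (a * b) := by gcongr; linarith

/-- Lemma 4.2: a QR factorization after preconditioning keeps the `off`
quantity small. -/
theorem off_after_qr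
    {m n : ℕ}
    (A ΔA : Matrix (Fin m) (Fin n) ℝ)
    (γ : ℝ) (hγ0 : 0 ≤ γ) (hγ1 : γ ≤ 1)
    (Q : Matrix (Fin m) (Fin m) ℝ) (R : Matrix (Fin m) (Fin n) ℝ)
    (hQ : Qᵀ * Q = 1)
    (hfact : A + ΔA = Q * R)
    (hcols : ∀ j, vecNorm (fun i => ΔA i j) ≤ γ * vecNorm (fun i => A i j)) :
    offF (Rᵀ * R) ≤ offF (Aᵀ * A) + 3 * (n : ℝ) ^ ((3 : ℝ) / 2) * γ * frobNorm (Aᵀ * A) := by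
  set E := (A + ΔA)ᵀ * (A + ΔA) - Aᵀ * A
  have hR : Rᵀ * R = Aᵀ * A + E := by
    rw [← transpose_mul_self_of_orthogonal hQ R, ← hfact, add_sub_cancel]
  have hE : frobNorm E ≤ 3 * γ * (Aᵀ * A).trace := by
    simpa only [vecNorm_col_sq, Matrix.trace, Matrix.diag] using
      frobNorm_le_of_abs_le_mul E _ (by positivity)
        (abs_gram_add_sub_gram_apply_le A ΔA hγ0 hγ1 hcols)
  have hF : 0 ≤ frobNorm (Aᵀ * A) := Real.sqrt_nonneg _
  calc offF (Rᵀ * R) ≤ offF (Aᵀ * A) + frobNorm E := hR ▸ offF_add_le _ _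
    _ ≤ offF (Aᵀ * A) + 3 * γ * (Real.sqrt n * frobNorm (Aᵀ * A)) := by
        gcongr
        exact hE.trans (by gcongr; exact trace_le_sqrt_card_mul_frobNorm _)
    _ ≤ offF (Aᵀ * A) + 3 * (n : ℝ) ^ ((3 : ℝ) / 2) * γ * frobNorm (Aᵀ * A) := by
        have h := mul_le_mul_of_nonneg_left (sqrt_natCast_le_rpow_three_halves n)
          (by positivity : 0 ≤ 3 * γ * frobNorm (Aᵀ * A))
        linarith
end
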